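/- Tree factorial leaf identity: for every rooted forest f, |f|/f! = Σ_{v ∈ leaves(f)} 1/(f∖{v})!, where the sum runs over the leaves of f and f∖{v} is the forest obtained by deleting leaf v. -/

import Mathlib

/-- Planar rooted trees. -/
inductive RTree : Type where
  | node : List RTree → RTree

mutual
/-- Number of nodes of a tree. -/
def tsize : RTree → ℕ
  | .node l => 1 + fsize l
/-- Number of nodes of a forest. -/
def fsize : List RTree → ℕ
  | [] => 0
  | t :: ts => tsize t + fsize ts
end

mutual
/-- The tree factorial `t! = Π_{v ∈ V(t)} |t_v|`. -/
def tfact : RTree → ℕ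
  | .node l => (1 + fsize l) * ffact l
/-- The tree factorial of a forest (product over its trees). -/
def ffact : List RTree → ℕ
  | [] => 1
  | t :: ts => tfact t * ffact ts
end

mutual
/-- All forests obtained from a tree by deleting one of its leaves
(one entry of the list for each leaf of the tree). -/
def delT : RTree → List (List RTree)
  | .node [] => [[]]
  | .node (t :: ts) => (delF (t :: ts)).map (fun g => [RTree.node g])
/-- All forests obtained from a forest by deleting one of its leaves
(one entry of the list for each leaf of the forest). -/
def delF : List RTree → List (List RTree)
  | [] => []
  | t :: ts => (delT t).map (· ++ ts) ++ (delF ts).map (t :: ·)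
end

/-!
Deleting a leaf of a tree `node l` with `l ≠ []` never deletes the root, so it amounts to deleting
a leaf `g` of the forest `l`; then `|g| = |l| - 1` and `(node g)! = |l| · g!`. Hence
`Σ_v 1/(t∖v)! = (1/|l|) Σ_g 1/g! = 1/l! = |t|/t!`, using the identity for `l`. For a forest `t :: ts`, a leaf lies
either in `t` or in `ts`, and `(|t| + |ts|)/(t! · ts!)` splits accordingly.
-/

mutual
theorem tfact_pos : ∀ t : RTree, 0 < tfact t
  | .node l => Nat.mul_pos (by omega) (ffact_pos l)
theorem ffact_pos : ∀ f : List RTree, 0 < ffact f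
  | [] => Nat.one_pos
  | t :: ts => Nat.mul_pos (tfact_pos t) (ffact_pos ts)
end

theorem fsize_append (a b : List RTree) : fsize (a ++ b) = fsize a + fsize b := by
  induction a with
  | nil => simp [fsize]
  | cons t ts ih => simp only [List.cons_append, fsize, ih]; ring

theorem ffact_append (a b : List RTree) : ffact (a ++ b) = ffact a * ffact b := by
  induction a with
  | nil => simp [ffact]
  | cons t ts ih => simp only [List.cons_append, ffact, ih]; ring

theorem fsize_cons_pos (t : RTree) (ts : List RTree) : 0 < fsize (t :: ts) := by
  cases t
  simp only [fsize, tsize]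
  omega

mutual
theorem fsize_add_one_of_mem_delT : ∀ {t : RTree} {g : List RTree}, g ∈ delT t →
    fsize g + 1 = tsize t
  | .node [], g, hg => by
    obtain rfl : g = [] := by simpa [delT] using hg
    simp [fsize, tsize]
  | .node (a :: ts), _, hg => by
    obtain ⟨h, hh, rfl⟩ := List.mem_map.mp hg
    have := fsize_add_one_of_mem_delF hh
    simp only [fsize, tsize] at *
    omega
theorem fsize_add_one_of_mem_delF : ∀ {f g : List RTree}, g ∈ delF f → fsize g + 1 = fsize f
  | t :: ts, _, hg => by
    rcases List.mem_append.mp hg with hg | hg <;> obtain ⟨h, hh, rfl⟩ := List.mem_map.mp hg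
    · have := fsize_add_one_of_mem_delT hh
      rw [fsize_append, fsize]
      omega
    · have := fsize_add_one_of_mem_delF hh
      simp only [fsize]
      omega
end

theorem tfact_node_of_mem_delF {l g : List RTree} (hg : g ∈ delF l) :
    tfact (.node g) = fsize l * ffact g := by
  rw [tfact, ← fsize_add_one_of_mem_delF hg, add_comm]

theorem tsize_div_tfact_node (l : List RTree) :
    (tsize (.node l) : ℚ) / tfact (.node l) = (ffact l : ℚ)⁻¹ := by
  have : (0 : ℚ) < ffact l := by exact_mod_cast ffact_pos l
  simp only [tsize, tfact]
  push_cast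
  field_simp

mutual
theorem sum_inv_ffact_delT : ∀ t : RTree,
    ((delT t).map fun g => (ffact g : ℚ)⁻¹).sum = tsize t / tfact t
  | .node [] => by simp [delT, tsize, tfact, fsize, ffact]
  | .node (a :: ts) => by
    have hl : (fsize (a :: ts) : ℚ) ≠ 0 := by exact_mod_cast (fsize_cons_pos a ts).ne'
    calc ((delT (.node (a :: ts))).map fun g => (ffact g : ℚ)⁻¹).sum
        = ((delF (a :: ts)).map fun g => (fsize (a :: ts) : ℚ)⁻¹ * (ffact g : ℚ)⁻¹).sum := by
          rw [delT, List.map_map]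
          refine congrArg List.sum (List.map_congr_left fun g hg => ?_)
          simp only [Function.comp_apply, ffact, Nat.cast_mul, mul_one,
            tfact_node_of_mem_delF hg, mul_inv]
      _ = (fsize (a :: ts) : ℚ)⁻¹ * (fsize (a :: ts) / ffact (a :: ts)) := by
          rw [List.sum_map_mul_left, sum_inv_ffact_delF]
      _ = tsize (.node (a :: ts)) / tfact (.node (a :: ts)) := by
          rw [tsize_div_tfact_node, div_eq_mul_inv, inv_mul_cancel_left₀ hl]
theorem sum_inv_ffact_delF : ∀ f : List RTree,
    ((delF f).map fun g => (ffact g : ℚ)⁻¹).sum = fsize f / ffact f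
  | [] => by simp [delF, fsize, ffact]
  | t :: ts => by
    have ht : (0 : ℚ) < tfact t := by exact_mod_cast tfact_pos t
    have hts : (0 : ℚ) < ffact ts := by exact_mod_cast ffact_pos ts
    have sum_left : ((delT t).map fun g => (ffact (g ++ ts) : ℚ)⁻¹).sum
        = (ffact ts : ℚ)⁻¹ * (tsize t / tfact t) := by
      simp only [ffact_append, Nat.cast_mul, mul_inv, ← sum_inv_ffact_delT t,
        ← List.sum_map_mul_left, mul_comm]
    have sum_right : ((delF ts).map fun g => (ffact (t :: g) : ℚ)⁻¹).sum
        = (tfact t : ℚ)⁻¹ * (fsize ts / ffact ts) := by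
      simp only [ffact, Nat.cast_mul, mul_inv, ← sum_inv_ffact_delF ts, ← List.sum_map_mul_left]
    rw [delF, List.map_append, List.sum_append, List.map_map, List.map_map]
    simp only [Function.comp_def]
    rw [sum_left, sum_right, fsize, ffact]
    push_cast
    field_simp
end

/-- tree factorial leaf identity: for every rooted forest `f`,
`|f| / f! = Σ_{v ∈ leaves(f)} 1 / (f∖{v})!`, the sum running over the leaves
of `f`, where `f∖{v}` is the forest obtained by deleting the leaf `v`. -/
theorem tree_factorial_leaf_identity (f : List RTree) :
    (fsize f : ℚ) / (ffact f : ℚ) =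
      ((delF f).map (fun g => (1 : ℚ) / (ffact g : ℚ))).sum := by
  simpa only [one_div] using (sum_inv_ffact_delF f).symm
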